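/- Two lens spaces L(q; p₁,...,p_n) and L(q'; p'₁,...,p'_n) are isospectral if and only if their associated congruence lattices L₁, L₂ ⊂ ℤ^n satisfy N_{L₁}(s) = N_{L₂}(s) for all s ∈ ℕ, where N_L(s) = #{α ∈ L : ||α||₁ = s}. -/

import Mathlib

open MvPolynomial
open scoped Real

/-- The Laplacian `∑_j ∂_{z_j} ∂_{z̄_j}` in complex coordinates on `ℝ^{2n} ≅ ℂⁿ`
(variables `inl j ↦ z_j`, `inr j ↦ z̄_j`). -/
noncomputable def cxLaplacian (n : ℕ) :
    MvPolynomial (Fin n ⊕ Fin n) ℂ →ₗ[ℂ] MvPolynomial (Fin n ⊕ Fin n) ℂ :=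
  ∑ j : Fin n, (pderiv (Sum.inl j)).toLinearMap ∘ₗ (pderiv (Sum.inr j)).toLinearMap

/-- The substitution induced by the generator `g : z_j ↦ e^{2πi p_j/q} z_j` of `G`. -/
noncomputable def lensSubst (n q : ℕ) (p : Fin n → ℤ) :
    MvPolynomial (Fin n ⊕ Fin n) ℂ →ₐ[ℂ] MvPolynomial (Fin n ⊕ Fin n) ℂ :=
  aeval (Sum.elim
    (fun j : Fin n =>
      C (Complex.exp (2 * π * (p j : ℂ) / (q : ℂ) * Complex.I)) * X (Sum.inl j))
    (fun j : Fin n =>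
      C (Complex.exp (-(2 * π * (p j : ℂ) / (q : ℂ)) * Complex.I)) * X (Sum.inr j)))

/-- The space of `G`-invariant harmonic homogeneous polynomials of degree `k` on
`ℝ^{2n} ≅ ℂⁿ`; its dimension is the multiplicity of the `k`-th eigenvalue of the
Laplace–Beltrami operator on the lens space `L(q; p₁,…,pₙ) = S^{2n-1}/G`. -/
noncomputable def invariantHarmonics (n q : ℕ) (p : Fin n → ℤ) (k : ℕ) :
    Submodule ℂ (MvPolynomial (Fin n ⊕ Fin n) ℂ) :=
  homogeneousSubmodule (Fin n ⊕ Fin n) ℂ k ⊓ LinearMap.ker (cxLaplacian n)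
    ⊓ LinearMap.ker ((lensSubst n q p).toLinearMap - LinearMap.id)

/-- `N_L(s)`: the number of points of the congruence lattice `L` of `ℓ¹`-norm `s`. -/
noncomputable def latticeCount (n q : ℕ) (p : Fin n → ℤ) (s : ℕ) : ℕ :=
  Set.ncard {α : Fin n → ℤ |
    ((q : ℤ) ∣ ∑ j : Fin n, α j * p j) ∧ ∑ j : Fin n, (α j).natAbs = s}

/-!
Every monomial `z^a z̄^b` is an eigenvector of the generator of `G`, with eigenvalue
`exp (2πi ∑ (a_j - b_j) p_j / q)`, so the `G`-invariant homogeneous polynomials of degree `k`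
are spanned by the monomials with `|a| + |b| = k` and `a - b` in the congruence lattice `L`.
Writing `(a_j, b_j) = (m_j + α_j⁺, m_j + α_j⁻)` with `α = a - b` and `m = min a b` shows that
there are `∑_{s ≤ k} #{m | s + 2|m| = k} • N_L(s)` of them.

On the other hand `Δ` maps invariant polynomials of degree `k + 2` onto those of degree `k`
(for `n > 0`): from `Δ (r² f) = (n + deg f) f + r² Δ f` one gets
`Δ (r^{2(j+1)} w) = (j + 1)(n + m + j) r^{2j} w + r^{2(j+1)} Δ w` for `w` of degree `m`, and
induction on `m` puts every `r^{2j} w` in the image. Hence the multiplicity in degree `k + 2` is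
the difference of the dimensions in degrees `k + 2` and `k`.

Both relations are unitriangular, so equality of all multiplicities, of all numbers of invariant
monomials and of all `N_L(s)` are equivalent.
-/

open Finset

theorem forall_sum_range_nsmul_eq_iff {M : Type*} [AddCancelCommMonoid M] {c : ℕ → ℕ → ℕ}
    (hc : ∀ k, c k k = 1) {f g : ℕ → M} :
    (∀ k, ∑ s ∈ range (k + 1), c k s • f s = ∑ s ∈ range (k + 1), c k s • g s) ↔
      ∀ k, f k = g k := by
  refine ⟨fun h k => ?_, fun h k => by simp only [h]⟩
  induction k using Nat.strong_induction_on with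
  | _ k ih =>
    have hk := h k
    rw [sum_range_succ, sum_range_succ, hc, one_smul, one_smul,
      sum_congr rfl fun s hs => by rw [ih s (mem_range.1 hs)]] at hk
    exact add_left_cancel hk

theorem eq_sum_range_even_sub_nsmul {M : Type*} [AddCommMonoid M] {a b : ℕ → M}
    (h₀ : b 0 = a 0) (h₁ : b 1 = a 1) (h : ∀ k, b (k + 2) = a (k + 2) + b k) (k : ℕ) :
    b k = ∑ s ∈ range (k + 1), (if Even (k - s) then 1 else 0) • a s := by
  induction k using Nat.twoStepInduction with
  | zero => simp [h₀]
  | one => simp [sum_range_succ, h₁]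
  | more k ih _ =>
    have hstep : ∀ s ∈ range (k + 1),
        (if Even (k + 2 - s) then 1 else 0) • a s = (if Even (k - s) then 1 else 0) • a s := by
      intro s hs
      rw [show k + 2 - s = k - s + 2 by grind]
      simp [Nat.even_add]
    rw [h, ih, sum_range_succ _ (k + 2), sum_range_succ _ (k + 1), sum_congr rfl hstep,
      Nat.sub_self, show k + 2 - (k + 1) = 1 by omega]
    simp [add_comm]

theorem Submodule.finrank_inf_ker_add_finrank_map {K V W : Type*} [DivisionRing K]
    [AddCommGroup V] [Module K V] [AddCommGroup W] [Module K W] (f : V →ₗ[K] W)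
    (P : Submodule K V) [FiniteDimensional K P] :
    Module.finrank K ↥(P ⊓ LinearMap.ker f) + Module.finrank K (P.map f) =
      Module.finrank K P := by
  rw [← LinearMap.range_domRestrict, ← (f.domRestrict P).finrank_range_add_finrank_ker,
    add_comm, LinearMap.ker_domRestrict, ← top_inf_eq (Submodule.comap _ _),
    ← Submodule.comap_subtype_self, ← Submodule.comap_inf,
    (Submodule.comapSubtypeEquivOfLe inf_le_left).finrank_eq]

namespace MvPolynomial

theorem restrictSupport_inter {σ R : Type*} [CommSemiring R] (s t : Set (σ →₀ ℕ)) :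
    restrictSupport R (s ∩ t) = restrictSupport R s ⊓ restrictSupport R t := by
  ext f
  simp [mem_restrictSupport_iff, Set.subset_inter_iff]

theorem finrank_restrictSupport {σ R : Type*} [CommRing R] [StrongRankCondition R]
    (s : Set (σ →₀ ℕ)) : Module.finrank R (restrictSupport R s) = s.ncard := by
  rw [Module.finrank_eq_nat_card_basis (basisRestrictSupport R s), Nat.card_coe_set_eq]

theorem pderiv_mem_restrictSupport {σ R : Type*} [CommSemiring R]
    {s : Set (σ →₀ ℕ)} {f : MvPolynomial σ R} (hf : f ∈ restrictSupport R s) (i : σ) :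
    pderiv i f ∈ restrictSupport R {d | d + Finsupp.single i 1 ∈ s} := by
  classical
  rw [f.as_sum, map_sum]
  refine Submodule.sum_mem _ fun d hd => ?_
  rw [pderiv_monomial, monomial_mem_restrictSupport]
  by_cases hdi : d i = 0
  · simp [hdi]
  · left
    rw [Set.mem_ofPred_eq,
      tsub_add_cancel_of_le (Finsupp.single_le_iff.2 (Nat.one_le_iff_ne_zero.2 hdi))]
    exact hf hd

section DiagonalSubstitution

variable {σ R : Type*} [CommRing R] (w : σ → R)

theorem aeval_C_mul_X_monomial (d : σ →₀ ℕ) (c : R) :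
    aeval (fun i => C (w i) * X i) (monomial d c) =
      monomial d ((d.prod fun i e => w i ^ e) * c) := by
  rw [aeval_monomial, monomial_eq, C_mul]
  simp_rw [mul_pow, ← map_pow]
  rw [Finsupp.prod_mul, ← map_finsuppProd, algebraMap_eq]
  ring

theorem coeff_aeval_C_mul_X (f : MvPolynomial σ R) (d : σ →₀ ℕ) :
    coeff d (aeval (fun i => C (w i) * X i) f) = (d.prod fun i e => w i ^ e) * coeff d f := by
  induction f using MvPolynomial.induction_on' with
  | monomial d' c =>
    classical
    rw [aeval_C_mul_X_monomial, coeff_monomial, coeff_monomial]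
    split_ifs with h <;> simp [h]
  | add f g hf hg => simp only [map_add, coeff_add, hf, hg, mul_add]

theorem ker_aeval_C_mul_X_sub_id [IsDomain R] :
    LinearMap.ker ((aeval fun i => C (w i) * X i).toLinearMap - LinearMap.id) =
      restrictSupport R {d | (d.prod fun i e => w i ^ e) = 1} := by
  ext f
  simp only [LinearMap.mem_ker, LinearMap.sub_apply, AlgHom.toLinearMap_apply,
    LinearMap.id_apply, sub_eq_zero, mem_restrictSupport_iff, Set.subset_def, Finset.mem_coe,
    mem_support_iff, Set.mem_ofPred_eq, MvPolynomial.ext_iff, coeff_aeval_C_mul_X,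
    mul_left_eq_self₀, or_iff_not_imp_right]

end DiagonalSubstitution

end MvPolynomial

section Exponents

variable {ι : Type*}

def signedExponent (d : (ι ⊕ ι) →₀ ℕ) (j : ι) : ℤ := d (.inl j) - d (.inr j)

@[simp]
theorem signedExponent_add (d e : (ι ⊕ ι) →₀ ℕ) :
    signedExponent (d + e) = signedExponent d + signedExponent e := by
  ext j
  simp only [signedExponent, Finsupp.add_apply, Nat.cast_add, Pi.add_apply]
  ring

noncomputable def absSqExponent [DecidableEq ι] (j : ι) : (ι ⊕ ι) →₀ ℕ :=
  Finsupp.single (.inl j) 1 + Finsupp.single (.inr j) 1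

@[simp]
theorem degree_absSqExponent [DecidableEq ι] (j : ι) : (absSqExponent j).degree = 2 := by
  simp [absSqExponent]

@[simp]
theorem signedExponent_absSqExponent [DecidableEq ι] (j : ι) :
    signedExponent (absSqExponent j) = 0 := by
  ext j'
  by_cases h : j = j' <;> simp [signedExponent, absSqExponent, h]

variable [Fintype ι]

noncomputable def exponentEquiv : ((ι ⊕ ι) →₀ ℕ) ≃ (ι → ℕ) × (ι → ℤ) where
  toFun d := (fun j => min (d (.inl j)) (d (.inr j)), signedExponent d)
  invFun x := Finsupp.equivFunOnFinite.symm
    (Sum.elim (fun j => x.1 j + (x.2 j).toNat) (fun j => x.1 j + (-x.2 j).toNat))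
  left_inv d := by
    ext (j | j) <;> simp [signedExponent] <;> omega
  right_inv x := by
    ext j <;> simp [signedExponent]; omega

theorem degree_eq_sum_natAbs_signedExponent_add (d : (ι ⊕ ι) →₀ ℕ) :
    d.degree = ∑ j, (signedExponent d j).natAbs + 2 * ∑ j, min (d (.inl j)) (d (.inr j)) := by
  rw [Finsupp.degree_eq_sum, Fintype.sum_sum_type, mul_sum, ← sum_add_distrib,
    ← sum_add_distrib]
  refine sum_congr rfl fun j _ => ?_
  simp only [signedExponent]
  omega

theorem ncard_setOf_degree_eq_and_signedExponent_mem (P : Set (ι → ℤ)) (k : ℕ) :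
    {d : (ι ⊕ ι) →₀ ℕ | d.degree = k ∧ signedExponent d ∈ P}.ncard =
      ∑ s ∈ range (k + 1), {m : ι → ℕ | s + 2 * ∑ j, m j = k}.ncard •
        {α | α ∈ P ∧ ∑ j, (α j).natAbs = s}.ncard := by
  classical
  set S := {d : (ι ⊕ ι) →₀ ℕ | d.degree = k ∧ signedExponent d ∈ P}
  have hS : S.Finite := (Finsupp.finite_of_degree_eq k).subset fun d hd => hd.1
  have hmaps : ∀ d ∈ hS.toFinset, ∑ j, (signedExponent d j).natAbs ∈ range (k + 1) := by
    intro d hd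
    have hdeg := (hS.mem_toFinset.1 hd).1
    have hsplit := degree_eq_sum_natAbs_signedExponent_add d
    rw [mem_range]
    omega
  rw [Set.ncard_eq_toFinset_card S hS, card_eq_sum_card_fiberwise hmaps]
  refine sum_congr rfl fun s _ => ?_
  rw [smul_eq_mul, ← Set.ncard_prod, ← Set.ncard_coe_finset,
    ← Set.ncard_preimage_of_injective_subset_range exponentEquiv.injective (by simp)]
  congr 1
  ext d
  have hsplit := degree_eq_sum_natAbs_signedExponent_add d
  simp only [coe_filter, Set.Finite.mem_toFinset, Set.mem_preimage, Set.mem_prod, S]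
  simp [exponentEquiv] at hsplit ⊢
  grind

theorem ncard_setOf_add_two_mul_sum_eq_self (k : ℕ) :
    {m : ι → ℕ | k + 2 * ∑ j, m j = k}.ncard = 1 := by
  rw [Set.ncard_eq_one]
  refine ⟨0, Set.ext fun m => ?_⟩
  simp [funext_iff]

end Exponents

section InvariantMonomials

variable {n : ℕ}

open Complex in
noncomputable def lensWeight (q : ℕ) (p : Fin n → ℤ) : Fin n ⊕ Fin n → ℂ :=
  Sum.elim (fun j => exp (2 * π * (p j : ℂ) / (q : ℂ) * I))
    (fun j => exp (-(2 * π * (p j : ℂ) / (q : ℂ)) * I))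

theorem lensSubst_eq_aeval (q : ℕ) (p : Fin n → ℤ) :
    lensSubst n q p = aeval fun i => C (lensWeight q p i) * X i := by
  unfold lensSubst
  congr 1
  ext (j | j) <;> rfl

open Complex in
theorem prod_pow_lensWeight (q : ℕ) (p : Fin n → ℤ) (d : (Fin n ⊕ Fin n) →₀ ℕ) :
    (d.prod fun i e => lensWeight q p i ^ e) =
      exp (2 * π * I / q) ^ ∑ j, signedExponent d j * p j := by
  rw [Finsupp.prod_fintype _ _ (by simp), Fintype.prod_sum_type, ← exp_int_mul]
  simp only [lensWeight, Sum.elim_inl, Sum.elim_inr, ← exp_nat_mul, ← exp_sum, ← exp_add,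
    ← sum_add_distrib]
  push_cast [signedExponent, sum_mul]
  congr 1
  refine sum_congr rfl fun j _ => ?_
  ring

theorem prod_pow_lensWeight_eq_one_iff {q : ℕ} (hq : 0 < q) (p : Fin n → ℤ)
    (d : (Fin n ⊕ Fin n) →₀ ℕ) :
    (d.prod fun i e => lensWeight q p i ^ e) = 1 ↔ (q : ℤ) ∣ ∑ j, signedExponent d j * p j := by
  rw [prod_pow_lensWeight, (Complex.isPrimitiveRoot_exp q hq.ne').zpow_eq_one_iff_dvd]

def invariantExponents (q : ℕ) (p : Fin n → ℤ) (k : ℕ) : Set ((Fin n ⊕ Fin n) →₀ ℕ) :=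
  {d | d.degree = k ∧ (q : ℤ) ∣ ∑ j, signedExponent d j * p j}

theorem homogeneousSubmodule_inf_ker_lensSubst {q : ℕ} (hq : 0 < q) (p : Fin n → ℤ) (k : ℕ) :
    homogeneousSubmodule (Fin n ⊕ Fin n) ℂ k ⊓
        LinearMap.ker ((lensSubst n q p).toLinearMap - LinearMap.id) =
      restrictSupport ℂ (invariantExponents q p k) := by
  rw [lensSubst_eq_aeval, ker_aeval_C_mul_X_sub_id, homogeneousSubmodule_eq_finsupp_supported,
    ← restrictSupport, ← restrictSupport_inter]
  simp_rw [prod_pow_lensWeight_eq_one_iff hq]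
  rfl

theorem invariantExponents_finite (q : ℕ) (p : Fin n → ℤ) (k : ℕ) :
    (invariantExponents q p k).Finite :=
  (Finsupp.finite_of_degree_eq k).subset fun _ hd => hd.1

theorem add_mem_invariantExponents_iff {q : ℕ} {p : Fin n → ℤ} {k : ℕ}
    {d e : (Fin n ⊕ Fin n) →₀ ℕ} (he : signedExponent e = 0) :
    d + e ∈ invariantExponents q p (k + e.degree) ↔ d ∈ invariantExponents q p k := by
  simp [invariantExponents, he]

end InvariantMonomials

section Laplacian

variable {n : ℕ}

theorem cxLaplacian_apply (f : MvPolynomial (Fin n ⊕ Fin n) ℂ) :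
    cxLaplacian n f = ∑ j, pderiv (.inl j) (pderiv (.inr j) f) := by
  simp [cxLaplacian]

theorem cxLaplacian_mem_restrictSupport {s : Set ((Fin n ⊕ Fin n) →₀ ℕ)}
    {f : MvPolynomial (Fin n ⊕ Fin n) ℂ} (hf : f ∈ restrictSupport ℂ s) :
    cxLaplacian n f ∈ restrictSupport ℂ {d | ∃ j, d + absSqExponent j ∈ s} := by
  rw [cxLaplacian_apply]
  refine Submodule.sum_mem _ fun j _ => restrictSupport_mono ℂ ?_
    (pderiv_mem_restrictSupport (pderiv_mem_restrictSupport hf _) _)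
  intro d hd
  exact ⟨j, by rwa [absSqExponent, ← add_assoc]⟩

variable (n) in
noncomputable def radiusSq : MvPolynomial (Fin n ⊕ Fin n) ℂ :=
  ∑ j, X (.inl j) * X (.inr j)

theorem isHomogeneous_radiusSq : (radiusSq n).IsHomogeneous 2 :=
  IsHomogeneous.sum _ _ _ fun _ _ => (isHomogeneous_X ℂ _).mul (isHomogeneous_X ℂ _)

theorem pderiv_inl_radiusSq (j : Fin n) : pderiv (.inl j) (radiusSq n) = X (.inr j) := by
  simp [radiusSq, pderiv_X, Pi.single_apply]

theorem pderiv_inr_radiusSq (j : Fin n) : pderiv (.inr j) (radiusSq n) = X (.inl j) := by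
  simp [radiusSq, pderiv_X, Pi.single_apply]

theorem cxLaplacian_radiusSq_mul {k : ℕ} {f : MvPolynomial (Fin n ⊕ Fin n) ℂ}
    (hf : f.IsHomogeneous k) :
    cxLaplacian n (radiusSq n * f) = (n + k) • f + radiusSq n * cxLaplacian n f := by
  have hterm : ∀ j, pderiv (.inl j) (pderiv (.inr j) (radiusSq n * f)) =
      f + X (.inl j) * pderiv (.inl j) f + X (.inr j) * pderiv (.inr j) f +
        radiusSq n * pderiv (.inl j) (pderiv (.inr j) f) := by
    intro j
    simp only [Derivation.leibniz, pderiv_inl_radiusSq, pderiv_inr_radiusSq, map_add,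
      pderiv_X_self, smul_eq_mul]
    ring
  have heuler := hf.sum_X_mul_pderiv
  rw [Fintype.sum_sum_type] at heuler
  simp only [cxLaplacian_apply, hterm, sum_add_distrib, ← mul_sum, sum_const, card_univ,
    Fintype.card_fin, add_nsmul, ← heuler]
  abel

theorem cxLaplacian_radiusSq_pow_succ_mul {m : ℕ} {f : MvPolynomial (Fin n ⊕ Fin n) ℂ}
    (hf : f.IsHomogeneous m) (j : ℕ) :
    cxLaplacian n (radiusSq n ^ (j + 1) * f) =
      ((j + 1) * (n + m + j)) • (radiusSq n ^ j * f) +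
        radiusSq n ^ (j + 1) * cxLaplacian n f := by
  induction j with
  | zero => simpa using cxLaplacian_radiusSq_mul hf
  | succ j ih =>
    have hhom := (isHomogeneous_radiusSq.pow (j + 1)).mul hf
    rw [pow_succ' _ (j + 1), mul_assoc, cxLaplacian_radiusSq_mul hhom, ih]
    simp only [mul_add (radiusSq n), mul_smul_comm, ← mul_assoc, ← pow_succ']
    module

variable {q : ℕ} {p : Fin n → ℤ} {k : ℕ} {f : MvPolynomial (Fin n ⊕ Fin n) ℂ}

theorem isHomogeneous_of_mem_restrictSupport_invariantExponents
    (hf : f ∈ restrictSupport ℂ (invariantExponents q p k)) : f.IsHomogeneous k := by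
  rw [← mem_homogeneousSubmodule, homogeneousSubmodule_eq_finsupp_supported]
  exact restrictSupport_mono ℂ (fun _ hd => hd.1) hf

theorem cxLaplacian_mem_restrictSupport_invariantExponents
    (hf : f ∈ restrictSupport ℂ (invariantExponents q p (k + 2))) :
    cxLaplacian n f ∈ restrictSupport ℂ (invariantExponents q p k) := by
  refine restrictSupport_mono ℂ ?_ (cxLaplacian_mem_restrictSupport hf)
  rintro d ⟨j, hj⟩
  rw [← degree_absSqExponent j] at hj
  exact (add_mem_invariantExponents_iff (signedExponent_absSqExponent j)).1 hj

theorem cxLaplacian_eq_zero_of_le_one (hk : k ≤ 1)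
    (hf : f ∈ restrictSupport ℂ (invariantExponents q p k)) : cxLaplacian n f = 0 := by
  have hempty : {d | ∃ j, d + absSqExponent j ∈ invariantExponents q p k} = ∅ := by
    ext d
    simp only [invariantExponents, map_add, degree_absSqExponent, Set.mem_ofPred_eq,
      Set.mem_empty_iff_false, iff_false, not_exists]
    omega
  have h := cxLaplacian_mem_restrictSupport hf
  rwa [hempty, mem_restrictSupport_iff, Set.subset_empty_iff, Finset.coe_eq_empty,
    support_eq_empty] at h

open Pointwise in
theorem radiusSq_mul_mem (hf : f ∈ restrictSupport ℂ (invariantExponents q p k)) :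
    radiusSq n * f ∈ restrictSupport ℂ (invariantExponents q p (k + 2)) := by
  have hr : radiusSq n ∈ restrictSupport ℂ (Set.range absSqExponent) := by
    refine Submodule.sum_mem _ fun j _ => ?_
    rw [X, X, monomial_mul, one_mul, monomial_mem_restrictSupport]
    exact .inl ⟨j, rfl⟩
  have hmul := Submodule.mul_mem_mul hr hf
  rw [← restrictSupport_add] at hmul
  refine restrictSupport_mono ℂ ?_ hmul
  rintro _ ⟨_, ⟨j, rfl⟩, d, hd, rfl⟩
  rw [← degree_absSqExponent j]
  simpa only [add_comm (absSqExponent j)] using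
    (add_mem_invariantExponents_iff (signedExponent_absSqExponent j)).2 hd

theorem radiusSq_pow_mul_mem (j : ℕ) (hf : f ∈ restrictSupport ℂ (invariantExponents q p k)) :
    radiusSq n ^ j * f ∈ restrictSupport ℂ (invariantExponents q p (k + 2 * j)) := by
  induction j with
  | zero => simpa using hf
  | succ j ih => simpa [pow_succ', mul_assoc, mul_add, add_assoc] using radiusSq_mul_mem ih

end Laplacian

section Multiplicities

variable {n q : ℕ} {p : Fin n → ℤ}

theorem radiusSq_pow_mul_mem_map_cxLaplacian (hn : 0 < n) (m : ℕ) :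
    ∀ j, ∀ w ∈ restrictSupport ℂ (invariantExponents q p m), radiusSq n ^ j * w ∈
      (restrictSupport ℂ (invariantExponents q p (m + 2 * j + 2))).map (cxLaplacian n) := by
  induction m using Nat.strong_induction_on with
  | _ m ih =>
    intro j w hw
    set image := (restrictSupport ℂ (invariantExponents q p (m + 2 * j + 2))).map (cxLaplacian n)
    have hlift : radiusSq n ^ (j + 1) * w ∈
        restrictSupport ℂ (invariantExponents q p (m + 2 * j + 2)) :=
      radiusSq_pow_mul_mem (j + 1) hw
    have hrest : radiusSq n ^ (j + 1) * cxLaplacian n w ∈ image := by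
      rcases le_or_gt m 1 with hm | hm
      · rw [cxLaplacian_eq_zero_of_le_one hm hw, mul_zero]
        exact zero_mem _
      · obtain ⟨m, rfl⟩ : ∃ m', m = m' + 2 := ⟨m - 2, by omega⟩
        simpa only [show m + 2 * (j + 1) + 2 = m + 2 + 2 * j + 2 by ring] using
          ih m (by omega) (j + 1) _ (cxLaplacian_mem_restrictSupport_invariantExponents hw)
    have hsmul : ((j + 1) * (n + m + j)) • (radiusSq n ^ j * w) ∈ image := by
      rw [← add_sub_cancel_right (_ • _) (radiusSq n ^ (j + 1) * cxLaplacian n w),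
        ← cxLaplacian_radiusSq_pow_succ_mul
          (isHomogeneous_of_mem_restrictSupport_invariantExponents hw) j]
      exact sub_mem (Submodule.mem_map_of_mem hlift) hrest
    rw [← Nat.cast_smul_eq_nsmul ℂ] at hsmul
    exact (Submodule.smul_mem_iff _ (Nat.cast_ne_zero.2 (by positivity))).1 hsmul

theorem map_cxLaplacian_restrictSupport_invariantExponents (hn : 0 < n) (k : ℕ) :
    (restrictSupport ℂ (invariantExponents q p (k + 2))).map (cxLaplacian n) =
      restrictSupport ℂ (invariantExponents q p k) :=
  le_antisymm
    (Submodule.map_le_iff_le_comap.2 fun _ => cxLaplacian_mem_restrictSupport_invariantExponents)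
    fun w hw => by simpa using radiusSq_pow_mul_mem_map_cxLaplacian hn k 0 w hw

theorem invariantHarmonics_eq (hq : 0 < q) (k : ℕ) :
    invariantHarmonics n q p k =
      restrictSupport ℂ (invariantExponents q p k) ⊓ LinearMap.ker (cxLaplacian n) := by
  rw [invariantHarmonics, inf_right_comm, homogeneousSubmodule_inf_ker_lensSubst hq]

instance (k : ℕ) : FiniteDimensional ℂ (restrictSupport ℂ (invariantExponents q p k)) :=
  have := (invariantExponents_finite q p k).to_subtype
  .of_basis (basisRestrictSupport ℂ _)

theorem finrank_invariantHarmonics_add_two (hn : 0 < n) (hq : 0 < q) (k : ℕ) :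
    Module.finrank ℂ (invariantHarmonics n q p (k + 2)) + (invariantExponents q p k).ncard =
      (invariantExponents q p (k + 2)).ncard := by
  rw [invariantHarmonics_eq hq, ← finrank_restrictSupport (R := ℂ),
    ← finrank_restrictSupport (R := ℂ), ← map_cxLaplacian_restrictSupport_invariantExponents hn k]
  exact Submodule.finrank_inf_ker_add_finrank_map _ _

theorem finrank_invariantHarmonics_of_le_one (hq : 0 < q) {k : ℕ} (hk : k ≤ 1) :
    Module.finrank ℂ (invariantHarmonics n q p k) = (invariantExponents q p k).ncard := by
  rw [invariantHarmonics_eq hq, inf_eq_left.2 fun _ => cxLaplacian_eq_zero_of_le_one hk,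
    finrank_restrictSupport]

theorem ncard_invariantExponents_eq_sum_finrank (hn : 0 < n) (hq : 0 < q) (k : ℕ) :
    (invariantExponents q p k).ncard = ∑ s ∈ range (k + 1),
      (if Even (k - s) then 1 else 0) • Module.finrank ℂ (invariantHarmonics n q p s) :=
  eq_sum_range_even_sub_nsmul (a := fun s => Module.finrank ℂ (invariantHarmonics n q p s))
    (b := fun k => (invariantExponents q p k).ncard)
    (finrank_invariantHarmonics_of_le_one hq zero_le_one).symm
    (finrank_invariantHarmonics_of_le_one hq le_rfl).symm
    (fun k => (finrank_invariantHarmonics_add_two hn hq k).symm) k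

theorem ncard_invariantExponents_eq_sum_latticeCount (k : ℕ) :
    (invariantExponents q p k).ncard = ∑ s ∈ range (k + 1),
      {m : Fin n → ℕ | s + 2 * ∑ j, m j = k}.ncard • latticeCount n q p s :=
  ncard_setOf_degree_eq_and_signedExponent_mem {α | (q : ℤ) ∣ ∑ j, α j * p j} k

end Multiplicities

theorem lensSubst_fin_zero (q₁ q₂ : ℕ) (p₁ p₂ : Fin 0 → ℤ) :
    lensSubst 0 q₁ p₁ = lensSubst 0 q₂ p₂ := by
  unfold lensSubst
  congr 1
  ext (j | j) <;> exact j.elim0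

theorem lens_spaces_isospectral_iff_lattice_counts_equal_general (n q₁ q₂ : ℕ)
    (hq₁ : 0 < q₁) (hq₂ : 0 < q₂) (p₁ p₂ : Fin n → ℤ) :
    (∀ k : ℕ, Module.finrank ℂ ↥(invariantHarmonics n q₁ p₁ k)
        = Module.finrank ℂ ↥(invariantHarmonics n q₂ p₂ k))
      ↔ (∀ s : ℕ, latticeCount n q₁ p₁ s = latticeCount n q₂ p₂ s) := by
  rcases n.eq_zero_or_pos with rfl | hn
  · refine iff_of_true (fun k => ?_) (fun s => ?_)
    · rw [invariantHarmonics, invariantHarmonics, lensSubst_fin_zero q₁ q₂ p₁ p₂]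
    · simp [latticeCount]
  calc _ ↔ ∀ k, (invariantExponents q₁ p₁ k).ncard = (invariantExponents q₂ p₂ k).ncard := by
        simp only [ncard_invariantExponents_eq_sum_finrank hn hq₁,
          ncard_invariantExponents_eq_sum_finrank hn hq₂]
        exact (forall_sum_range_nsmul_eq_iff (by simp)).symm
    _ ↔ _ := by
        simp only [ncard_invariantExponents_eq_sum_latticeCount]
        exact forall_sum_range_nsmul_eq_iff ncard_setOf_add_two_mul_sum_eq_self

/-- two lens spaces `L(q; p₁,…,pₙ)` and `L(q'; p'₁,…,p'ₙ)` are isospectral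
(for every degree `k` the multiplicities, i.e. the dimensions of the spaces of invariant
harmonic homogeneous polynomials of degree `k`, coincide) if and only if their associated
congruence lattices satisfy `N_{L₁}(s) = N_{L₂}(s)` for all `s ∈ ℕ`. -/
theorem lens_spaces_isospectral_iff_lattice_counts_equal (n q₁ q₂ : ℕ)
    (hq₁ : 0 < q₁) (hq₂ : 0 < q₂) (p₁ p₂ : Fin n → ℤ)
    (hp₁ : ∀ j, IsCoprime (p₁ j) (q₁ : ℤ)) (hp₂ : ∀ j, IsCoprime (p₂ j) (q₂ : ℤ)) :
    (∀ k : ℕ, Module.finrank ℂ ↥(invariantHarmonics n q₁ p₁ k)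
        = Module.finrank ℂ ↥(invariantHarmonics n q₂ p₂ k))
      ↔ (∀ s : ℕ, latticeCount n q₁ p₁ s = latticeCount n q₂ p₂ s) :=
  lens_spaces_isospectral_iff_lattice_counts_equal_general n q₁ q₂ hq₁ hq₂ p₁ p₂
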